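/- arXiv:2407.09382 — 2 statements merged into one kernel-verified Lean document; each statement's English description precedes it below -/
import Mathlib

section
/- Let M be an N×n orthogonal array OA(N,n,s,k) over alphabet A with |A| = s = d². Assign to each symbol a ∈ A a generalized Pauli P_a on ℂ^d, and set U_j = P_{M(j,1)} ⊗ ⋯ ⊗ P_{M(j,n)}. Then for every k-local traceless Hamiltonian term h supported on qudits i₁ < ⋯ < i_k, (1/N) Σ_{j=1}^N U_j h U_j† = 0. Consequently (1/N) Σ_j U_j H U_j† = 0 for every k-local Hamiltonian H on n qudits whose local terms are traceless, i.e., the rows of the OA give a decoupling scheme. -/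
open Matrix Complex
lemma pairA (d : ℕ) (P : Fin (d ^ 2) → Matrix (Fin d) (Fin d) ℂ)
    (hPdep : ∀ m : Matrix (Fin d) (Fin d) ℂ,
      ∑ a, P a * m * (P a)ᴴ = ((d : ℂ) * m.trace) • (1 : Matrix (Fin d) (Fin d) ℂ))
    (p q r t : Fin d) :
    ∑ a, P a p q * star (P a r t) =
      (d : ℂ) * (if q = t then 1 else 0) * (if p = r then 1 else 0) := by
  have h := congrArg (fun m => m p r)
    (hPdep (Matrix.of fun c c' => if c = q ∧ c' = t then (1:ℂ) else 0))
  simp only [Matrix.sum_apply, Matrix.mul_apply, Matrix.conjTranspose_apply,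
    Matrix.smul_apply, Matrix.one_apply, Matrix.of_apply, Matrix.trace,
    Matrix.diag_apply, smul_eq_mul, ite_and, mul_ite, mul_one, mul_zero, ite_mul, zero_mul,
    Finset.sum_ite_eq', Finset.mem_univ, if_true] at h
  rw [h]
  rcases eq_or_ne q t with h1 | h1 <;> rcases eq_or_ne p r with h2 | h2 <;> simp [h1, h2] <;> ring


lemma row_entry {d k n : ℕ} (P : Fin (d ^ 2) → Matrix (Fin d) (Fin d) ℂ)
    (hPu : ∀ a p r, ∑ c, P a p c * star (P a r c) = if p = r then (1:ℂ) else 0)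
    (f : Fin k → Fin n) (hf : Function.Injective f)
    (h₀ : Matrix (Fin k → Fin d) (Fin k → Fin d) ℂ)
    (w : Fin n → Fin (d ^ 2)) (x y : Fin n → Fin d) :
    (∑ x' : Fin n → Fin d, ∑ y' : Fin n → Fin d,
      (∏ i, P (w i) (x i) (x' i)) *
        (if ∀ i, (∀ l, f l ≠ i) → x' i = y' i then
            h₀ (fun l => x' (f l)) (fun l => y' (f l)) else 0) *
        star (∏ i, P (w i) (y i) (y' i)))
    = (∏ i : {i : Fin n // ¬ ∃ l, f l = i}, if x i.1 = y i.1 then (1:ℂ) else 0) *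
      ∑ u : Fin k → Fin d, ∑ v : Fin k → Fin d,
        (∏ l, P (w (f l)) (x (f l)) (u l)) * h₀ u v *
          star (∏ l, P (w (f l)) (y (f l)) (v l)) := by
  classical
  let Q : Fin n → Prop := fun i => ∃ l, f l = i
  let g : Fin k ≃ {i // Q i} :=
    (Equiv.ofInjective f hf).trans (Equiv.subtypeEquivRight (fun i => Iff.rfl))
  let E : ((Fin k → Fin d) × ({i // ¬ Q i} → Fin d)) ≃ (Fin n → Fin d) :=
    (Equiv.prodCongr (Equiv.arrowCongr g (Equiv.refl (Fin d))) (Equiv.refl _)).trans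
      (Equiv.piEquivPiSubtypeProd Q (fun _ => Fin d)).symm
  have hgval : ∀ l, (g l : Fin n) = f l := fun l => rfl
  have hE : ∀ (u : Fin k → Fin d) (a : {i // ¬ Q i} → Fin d) (i : Fin n),
      E (u, a) i = if h : Q i then u (g.symm ⟨i, h⟩) else a ⟨i, h⟩ := fun u a i => rfl
  have hgsymm : ∀ (l : Fin k) (h : Q (f l)), g.symm ⟨f l, h⟩ = l := by
    intro l h
    simp only [g, Equiv.symm_trans_apply]
    exact Equiv.ofInjective_symm_apply hf l
  have hE1 : ∀ u a (l : Fin k), E (u, a) (f l) = u l := by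
    intro u a l
    rw [hE, dif_pos ⟨l, rfl⟩, hgsymm]
  have hE2 : ∀ u a (i : Fin n) (h : ¬ Q i), E (u, a) i = a ⟨i, h⟩ := by
    intro u a i h
    rw [hE, dif_neg h]

  have harg : ∀ (u : Fin k → Fin d) (a : {i // ¬ Q i} → Fin d),
      (fun l => E (u, a) (f l)) = u := by
    intro u a; funext l; exact hE1 u a l
  have hcond : ∀ (u : Fin k → Fin d) a (v : Fin k → Fin d) b,
      (∀ i, (∀ l, f l ≠ i) → E (u, a) i = E (v, b) i) ↔ a = b := by
    intro u a v b
    constructor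
    · intro h; funext i
      have hi : ¬ Q i := i.2
      have h2 := h i.1 (fun l hl => hi ⟨l, hl⟩)
      rwa [hE2 u a i.1 hi, hE2 v b i.1 hi] at h2
    · intro h i hl
      have hi : ¬ Q i := fun hq => hq.elim (fun l he => hl l he)
      rw [hE2 u a i hi, hE2 v b i hi, h]
  have hprod : ∀ (z : Fin n → Fin d) (u : Fin k → Fin d) (a : {i // ¬ Q i} → Fin d),
      (∏ i, P (w i) (z i) (E (u, a) i)) =
        (∏ l, P (w (f l)) (z (f l)) (u l)) *
          ∏ i : {i // ¬ Q i}, P (w i.1) (z i.1) (a i) := by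
    intro z u a
    rw [← Fintype.prod_subtype_mul_prod_subtype Q (fun i => P (w i) (z i) (E (u, a) i))]
    congr 1
    · rw [← Equiv.prod_comp g (fun i => P (w i.1) (z i.1) (E (u, a) i.1))]
      apply Finset.prod_congr rfl; intro l _
      have : (g l : Fin n) = f l := rfl
      rw [this, hE1]
    · apply Finset.prod_congr rfl; intro i _
      rw [hE2 u a i.1 i.2]
  have hoff : (∑ a : {i // ¬ Q i} → Fin d,
      (∏ i : {i // ¬ Q i}, P (w i.1) (x i.1) (a i)) *
        star (∏ i : {i // ¬ Q i}, P (w i.1) (y i.1) (a i)))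
      = ∏ i : {i : Fin n // ¬ ∃ l, f l = i}, if x i.1 = y i.1 then (1:ℂ) else 0 := by
    have : ∀ a : {i // ¬ Q i} → Fin d,
        (∏ i : {i // ¬ Q i}, P (w i.1) (x i.1) (a i)) *
          star (∏ i : {i // ¬ Q i}, P (w i.1) (y i.1) (a i))
        = ∏ i : {i // ¬ Q i}, (P (w i.1) (x i.1) (a i) * star (P (w i.1) (y i.1) (a i))) := by
      intro a
      rw [star_prod, Finset.prod_mul_distrib]
    rw [Finset.sum_congr rfl (fun a _ => this a)]
    have hfac : (∏ i : {i // ¬ Q i}, ∑ c : Fin d,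
          P (w i.1) (x i.1) c * star (P (w i.1) (y i.1) c))
        = ∑ a : {i // ¬ Q i} → Fin d,
            ∏ i : {i // ¬ Q i}, P (w i.1) (x i.1) (a i) * star (P (w i.1) (y i.1) (a i)) := by
      rw [Finset.prod_univ_sum, Fintype.piFinset_univ]
    rw [← hfac]
    exact Finset.prod_congr rfl (fun i _ => hPu _ _ _)
  have hterm : ∀ (u : Fin k → Fin d) a (v : Fin k → Fin d) b,
      (∏ i, P (w i) (x i) (E (u, a) i)) *
        (if ∀ i, (∀ l, f l ≠ i) → E (u, a) i = E (v, b) i then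
            h₀ (fun l => E (u, a) (f l)) (fun l => E (v, b) (f l)) else 0) *
        star (∏ i, P (w i) (y i) (E (v, b) i))
      = (if a = b then
          ((∏ l, P (w (f l)) (x (f l)) (u l)) * h₀ u v *
            star (∏ l, P (w (f l)) (y (f l)) (v l))) *
          ((∏ i : {i // ¬ Q i}, P (w i.1) (x i.1) (a i)) *
            star (∏ i : {i // ¬ Q i}, P (w i.1) (y i.1) (b i)))
        else 0) := by
    intro u a v b
    rw [hprod x u a, hprod y v b, harg u a, harg v b, star_mul']
    by_cases hab : a = b
    · rw [if_pos ((hcond u a v b).mpr hab), if_pos hab]; ring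
    · rw [if_neg (fun hc => hab ((hcond u a v b).mp hc)), if_neg hab]; ring
  calc (∑ x' : Fin n → Fin d, ∑ y' : Fin n → Fin d,
      (∏ i, P (w i) (x i) (x' i)) *
        (if ∀ i, (∀ l, f l ≠ i) → x' i = y' i then
            h₀ (fun l => x' (f l)) (fun l => y' (f l)) else 0) *
        star (∏ i, P (w i) (y i) (y' i)))
      = ∑ p : (Fin k → Fin d) × ({i // ¬ Q i} → Fin d),
          ∑ q : (Fin k → Fin d) × ({i // ¬ Q i} → Fin d),
          (∏ i, P (w i) (x i) (E p i)) *
            (if ∀ i, (∀ l, f l ≠ i) → E p i = E q i then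
                h₀ (fun l => E p (f l)) (fun l => E q (f l)) else 0) *
            star (∏ i, P (w i) (y i) (E q i)) := by
        rw [← Equiv.sum_comp E]
        exact Finset.sum_congr rfl fun p _ => (Equiv.sum_comp E _).symm
    _ = ∑ u : Fin k → Fin d, ∑ a : {i // ¬ Q i} → Fin d,
          ∑ v : Fin k → Fin d, ∑ b : {i // ¬ Q i} → Fin d,
          (if a = b then
            ((∏ l, P (w (f l)) (x (f l)) (u l)) * h₀ u v *
              star (∏ l, P (w (f l)) (y (f l)) (v l))) *
            ((∏ i : {i // ¬ Q i}, P (w i.1) (x i.1) (a i)) *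
              star (∏ i : {i // ¬ Q i}, P (w i.1) (y i.1) (b i)))
          else 0) := by
        simp only [Fintype.sum_prod_type]
        exact Finset.sum_congr rfl fun u _ => Finset.sum_congr rfl fun a _ =>
          Finset.sum_congr rfl fun v _ => Finset.sum_congr rfl fun b _ => hterm u a v b
    _ = ∑ u : Fin k → Fin d, ∑ a : {i // ¬ Q i} → Fin d,
          ∑ v : Fin k → Fin d,
          ((∏ l, P (w (f l)) (x (f l)) (u l)) * h₀ u v *
            star (∏ l, P (w (f l)) (y (f l)) (v l))) *
          ((∏ i : {i // ¬ Q i}, P (w i.1) (x i.1) (a i)) *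
            star (∏ i : {i // ¬ Q i}, P (w i.1) (y i.1) (a i))) := by
        refine Finset.sum_congr rfl fun u _ => Finset.sum_congr rfl fun a _ =>
          Finset.sum_congr rfl fun v _ => ?_
        rw [Finset.sum_ite_eq, if_pos (Finset.mem_univ a)]
    _ = ∑ u : Fin k → Fin d, ∑ v : Fin k → Fin d,
          ((∏ l, P (w (f l)) (x (f l)) (u l)) * h₀ u v *
            star (∏ l, P (w (f l)) (y (f l)) (v l))) *
          ∑ a : {i // ¬ Q i} → Fin d,
            ((∏ i : {i // ¬ Q i}, P (w i.1) (x i.1) (a i)) *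
              star (∏ i : {i // ¬ Q i}, P (w i.1) (y i.1) (a i))) := by
        refine Finset.sum_congr rfl fun u _ => ?_
        rw [Finset.sum_comm]
        exact Finset.sum_congr rfl fun v _ => (Finset.mul_sum _ _ _).symm
    _ = (∏ i : {i : Fin n // ¬ ∃ l, f l = i}, if x i.1 = y i.1 then (1:ℂ) else 0) *
        ∑ u : Fin k → Fin d, ∑ v : Fin k → Fin d,
          (∏ l, P (w (f l)) (x (f l)) (u l)) * h₀ u v *
            star (∏ l, P (w (f l)) (y (f l)) (v l)) := by
        rw [hoff, Finset.mul_sum]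
        refine Finset.sum_congr rfl fun u _ => ?_
        rw [Finset.mul_sum]
        exact Finset.sum_congr rfl fun v _ => mul_comm _ _


lemma depol_sum {d k : ℕ} (P : Fin (d ^ 2) → Matrix (Fin d) (Fin d) ℂ)
    (hA : ∀ p q r t : Fin d, ∑ a, P a p q * star (P a r t) =
      (d : ℂ) * (if q = t then 1 else 0) * (if p = r then 1 else 0))
    (h₀ : Matrix (Fin k → Fin d) (Fin k → Fin d) ℂ) (htr : h₀.trace = 0)
    (xs ys : Fin k → Fin d) :
    (∑ v : Fin k → Fin (d ^ 2), ∑ u : Fin k → Fin d, ∑ t : Fin k → Fin d,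
      (∏ l, P (v l) (xs l) (u l)) * h₀ u t * star (∏ l, P (v l) (ys l) (t l))) = 0 := by
  classical
  have key : ∀ (u t : Fin k → Fin d),
      (∑ v : Fin k → Fin (d ^ 2),
        ∏ l, (P (v l) (xs l) (u l) * star (P (v l) (ys l) (t l))))
      = ∏ l, ((d : ℂ) * (if u l = t l then 1 else 0) * (if xs l = ys l then 1 else 0)) := by
    intro u t
    have hfac : (∏ l, ∑ a, P a (xs l) (u l) * star (P a (ys l) (t l)))
        = ∑ v : Fin k → Fin (d ^ 2), ∏ l, (P (v l) (xs l) (u l) * star (P (v l) (ys l) (t l))) := by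
      rw [Finset.prod_univ_sum, Fintype.piFinset_univ]
    rw [← hfac]
    exact Finset.prod_congr rfl fun l _ => hA _ _ _ _
  have step1 : (∑ v : Fin k → Fin (d ^ 2), ∑ u : Fin k → Fin d, ∑ t : Fin k → Fin d,
      (∏ l, P (v l) (xs l) (u l)) * h₀ u t * star (∏ l, P (v l) (ys l) (t l)))
      = ∑ u : Fin k → Fin d, ∑ t : Fin k → Fin d, h₀ u t *
          ∑ v : Fin k → Fin (d ^ 2),
            ∏ l, (P (v l) (xs l) (u l) * star (P (v l) (ys l) (t l))) := by
    rw [Finset.sum_comm]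
    refine Finset.sum_congr rfl fun u _ => ?_
    rw [Finset.sum_comm]
    refine Finset.sum_congr rfl fun t _ => ?_
    rw [Finset.mul_sum]
    refine Finset.sum_congr rfl fun v _ => ?_
    rw [star_prod, Finset.prod_mul_distrib]
    ring
  rw [step1]
  have step2 : ∀ u t : Fin k → Fin d,
      (∏ l, ((d : ℂ) * (if u l = t l then 1 else 0) * (if xs l = ys l then 1 else 0)))
      = ((d : ℂ) ^ k * (∏ l, if xs l = ys l then (1:ℂ) else 0)) * (if u = t then 1 else 0) := by
    intro u t
    rw [Finset.prod_mul_distrib, Finset.prod_mul_distrib, Finset.prod_const,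
      Finset.prod_boole, Finset.card_univ, Fintype.card_fin]
    by_cases h : u = t
    · have h2 : ∀ i ∈ Finset.univ, u i = t i := by simp [h]
      rw [if_pos h2, if_pos h]; ring
    · have h2 : ¬ ∀ i ∈ Finset.univ, u i = t i := by simpa [funext_iff] using h
      rw [if_neg h2, if_neg h]; ring
  calc (∑ u : Fin k → Fin d, ∑ t : Fin k → Fin d, h₀ u t *
          ∑ v : Fin k → Fin (d ^ 2),
            ∏ l, (P (v l) (xs l) (u l) * star (P (v l) (ys l) (t l))))
      = ∑ u : Fin k → Fin d, ∑ t : Fin k → Fin d,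
          (if u = t then h₀ u t * ((d : ℂ) ^ k * ∏ l, if xs l = ys l then (1:ℂ) else 0) else 0) := by
        refine Finset.sum_congr rfl fun u _ => Finset.sum_congr rfl fun t _ => ?_
        rw [key u t, step2 u t]
        by_cases h : u = t
        · rw [if_pos h, if_pos h]; ring
        · rw [if_neg h, if_neg h]; ring
    _ = ∑ u : Fin k → Fin d, h₀ u u * ((d : ℂ) ^ k * ∏ l, if xs l = ys l then (1:ℂ) else 0) := by
        refine Finset.sum_congr rfl fun u _ => ?_
        rw [Finset.sum_ite_eq, if_pos (Finset.mem_univ u)]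
    _ = 0 := by
        rw [← Finset.sum_mul]
        have : (∑ u : Fin k → Fin d, h₀ u u) = h₀.trace := rfl
        rw [this, htr, zero_mul]

/-- Orthogonal arrays give decoupling schemes for `k`-local Hamiltonians: if `M` is an
`OA(N, n, d², k)` and each row is turned into a tensor product `U_j` of generalized
Paulis (a family `P` that is unitary and satisfies the single-qudit depolarizing
property), then `(1/N) Σ_j U_j h U_j† = 0` for every `k`-local traceless Hermitian term
`h` supported on qudits `i₁ < ⋯ < i_k`, and consequently `(1/N) Σ_j U_j H U_j† = 0`
for every `k`-local Hamiltonian `H` whose local terms are traceless. -/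
theorem stmt12 (d k n N : ℕ) (hd : 2 ≤ d) (hk : 0 < k) (hkn : k ≤ n) (hN : 0 < N)
    (hdvd : (d ^ 2) ^ k ∣ N)
    (M : Fin N → Fin n → Fin (d ^ 2))
    (hOA : ∀ c : Fin k → Fin n, Function.Injective c →
      ∀ v : Fin k → Fin (d ^ 2),
        (Finset.univ.filter fun j : Fin N => ∀ i : Fin k, M j (c i) = v i).card
          = N / (d ^ 2) ^ k)
    (P : Fin (d ^ 2) → Matrix (Fin d) (Fin d) ℂ)
    (hPunit : ∀ a, P a * (P a)ᴴ = 1 ∧ (P a)ᴴ * P a = 1)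
    (hPdep : ∀ m : Matrix (Fin d) (Fin d) ℂ,
      ∑ a, P a * m * (P a)ᴴ = ((d : ℂ) * m.trace) • (1 : Matrix (Fin d) (Fin d) ℂ))
    (U : Fin N → Matrix (Fin n → Fin d) (Fin n → Fin d) ℂ)
    (hU : ∀ j x y, U j x y = ∏ i : Fin n, P (M j i) (x i) (y i))
    (ι : Type) [Fintype ι]
    (supp : ι → (Fin k → Fin n)) (hsupp : ∀ s, StrictMono (supp s))
    (h₀ : ι → Matrix (Fin k → Fin d) (Fin k → Fin d) ℂ)
    (hherm : ∀ s, (h₀ s).IsHermitian) (htraceless : ∀ s, (h₀ s).trace = 0)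
    (emb : ι → Matrix (Fin n → Fin d) (Fin n → Fin d) ℂ)
    (hemb : ∀ s x y, emb s x y =
      if ∀ i : Fin n, (∀ l : Fin k, supp s l ≠ i) → x i = y i then
        h₀ s (fun l => x (supp s l)) (fun l => y (supp s l))
      else 0) :
    (∀ s, ((N : ℂ)⁻¹) • ∑ j, U j * emb s * (U j)ᴴ = 0) ∧
      ((N : ℂ)⁻¹) • ∑ j, U j * (∑ s, emb s) * (U j)ᴴ = 0 := by
  classical
  have hPu : ∀ a (p r : Fin d), ∑ c, P a p c * star (P a r c) = if p = r then (1:ℂ) else 0 := by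
    intro a p r
    have := congrArg (fun m => m p r) (hPunit a).1
    simpa [Matrix.mul_apply, Matrix.conjTranspose_apply, Matrix.one_apply] using this
  have hA := pairA d P hPdep
  have key : ∀ s, (∑ j, U j * emb s * (U j)ᴴ) = 0 := by
    intro s
    have hf : Function.Injective (supp s) := (hsupp s).injective
    ext x y
    rw [Matrix.sum_apply, Matrix.zero_apply]
    have count : ∀ F : (Fin k → Fin (d ^ 2)) → ℂ,
        (∑ vv : Fin k → Fin (d ^ 2), F vv) = 0 →
        (∑ j, F (fun l => M j (supp s l))) = 0 := by
      intro F hF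
      have h1 : (∑ j, F (fun l => M j (supp s l)))
          = ∑ vv : Fin k → Fin (d ^ 2),
              ∑ j ∈ Finset.univ.filter (fun j => (fun l => M j (supp s l)) = vv),
                F (fun l => M j (supp s l)) := (Finset.sum_fiberwise _ _ _).symm
      rw [h1]
      have h2 : ∀ vv : Fin k → Fin (d ^ 2),
          (∑ j ∈ Finset.univ.filter (fun j => (fun l => M j (supp s l)) = vv),
            F (fun l => M j (supp s l)))
          = ((N / (d ^ 2) ^ k : ℕ) : ℂ) * F vv := by
        intro vv
        rw [Finset.sum_congr rfl (fun j hj => by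
          rw [(Finset.mem_filter.mp hj).2])]
        rw [Finset.sum_const, nsmul_eq_mul]
        congr 1
        have h3 : (Finset.univ.filter (fun j : Fin N => (fun l => M j (supp s l)) = vv))
            = Finset.univ.filter (fun j : Fin N => ∀ i, M j (supp s i) = vv i) := by
          apply Finset.filter_congr
          intro j _
          simp [funext_iff]
        rw [h3, hOA (supp s) hf vv]
      rw [Finset.sum_congr rfl (fun vv _ => h2 vv), ← Finset.mul_sum, hF, mul_zero]
    have entry : ∀ j, (U j * emb s * (U j)ᴴ) x y =
        (∏ i : {i : Fin n // ¬ ∃ l, supp s l = i}, if x i.1 = y i.1 then (1:ℂ) else 0) *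
        ∑ u : Fin k → Fin d, ∑ v : Fin k → Fin d,
          (∏ l, P (M j (supp s l)) (x (supp s l)) (u l)) * h₀ s u v *
            star (∏ l, P (M j (supp s l)) (y (supp s l)) (v l)) := by
      intro j
      have expand : (U j * emb s * (U j)ᴴ) x y
          = ∑ x' : Fin n → Fin d, ∑ y' : Fin n → Fin d,
              (∏ i, P (M j i) (x i) (x' i)) *
                (if ∀ i, (∀ l, supp s l ≠ i) → x' i = y' i then
                    h₀ s (fun l => x' (supp s l)) (fun l => y' (supp s l)) else 0) *
                star (∏ i, P (M j i) (y i) (y' i)) := by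
        simp only [Matrix.mul_apply, Matrix.conjTranspose_apply, Finset.sum_mul]
        rw [Finset.sum_comm]
        refine Finset.sum_congr rfl fun x' _ => Finset.sum_congr rfl fun y' _ => ?_
        rw [hU, hU, hemb]
      rw [expand]
      exact row_entry P hPu (supp s) hf (h₀ s) (M j) x y
    calc (∑ j, (U j * emb s * (U j)ᴴ) x y)
        = ∑ j, (∏ i : {i : Fin n // ¬ ∃ l, supp s l = i}, if x i.1 = y i.1 then (1:ℂ) else 0) *
            ∑ u : Fin k → Fin d, ∑ v : Fin k → Fin d,
              (∏ l, P (M j (supp s l)) (x (supp s l)) (u l)) * h₀ s u v *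
                star (∏ l, P (M j (supp s l)) (y (supp s l)) (v l)) :=
          Finset.sum_congr rfl fun j _ => entry j
      _ = (∏ i : {i : Fin n // ¬ ∃ l, supp s l = i}, if x i.1 = y i.1 then (1:ℂ) else 0) *
            ∑ j, ∑ u : Fin k → Fin d, ∑ v : Fin k → Fin d,
              (∏ l, P (M j (supp s l)) (x (supp s l)) (u l)) * h₀ s u v *
                star (∏ l, P (M j (supp s l)) (y (supp s l)) (v l)) :=
          (Finset.mul_sum _ _ _).symm
      _ = 0 := by
          rw [count (fun vv => ∑ u : Fin k → Fin d, ∑ v : Fin k → Fin d,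
              (∏ l, P (vv l) (x (supp s l)) (u l)) * h₀ s u v *
                star (∏ l, P (vv l) (y (supp s l)) (v l)))
            (depol_sum P hA (h₀ s) (htraceless s) (fun l => x (supp s l)) (fun l => y (supp s l))),
            mul_zero]
  constructor
  · intro s
    rw [key s, smul_zero]
  · have : (∑ j, U j * (∑ s, emb s) * (U j)ᴴ) = 0 := by
      have expand : ∀ j, U j * (∑ s, emb s) * (U j)ᴴ = ∑ s, U j * emb s * (U j)ᴴ := by
        intro j
        rw [Finset.mul_sum, Finset.sum_mul]
      rw [Finset.sum_congr rfl fun j _ => expand j, Finset.sum_comm]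
      rw [Finset.sum_congr rfl fun s _ => key s, Finset.sum_const, smul_zero]
    rw [this, smul_zero]
end

section
/- Graph-coloring reduction for decoupling: let G be a graph on vertex set {1,…,n} with a proper coloring c : {1,…,n} → {1,…,χ}, and let H = Σ_{(u,v) ∈ E(G)} H_{uv} be a 2-local Hamiltonian whose interaction graph is G (each H_{uv} is traceless on each tensor factor of its support). If (1/N) Σ_{j=1}^N (Q_{j,1} ⊗ ⋯ ⊗ Q_{j,χ}) h (Q_{j,1} ⊗ ⋯ ⊗ Q_{j,χ})† = 0 for all 2-local traceless h on χ qudits (a decoupling scheme for the complete graph on χ qudits), then applying at step j the operation U_j = ⊗_{v=1}^n Q_{j,c(v)} gives a decoupling scheme for H: (1/N) Σ_j U_j H U_j† = 0. -/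
open Matrix Complex

namespace Stmt17Aux

set_option linter.unusedSectionVars false

variable {ι : Type*} [Fintype ι] [DecidableEq ι] {d : ℕ}

def E (u v : ι) (huv : u ≠ v) (d : ℕ) :
    (Fin d × Fin d × ({i : ι // i ≠ u ∧ i ≠ v} → Fin d)) ≃ (ι → Fin d) where
  toFun z i := if h1 : i = u then z.1 else if h2 : i = v then z.2.1 else z.2.2 ⟨i, h1, h2⟩
  invFun s := (s u, s v, fun i => s i.1)
  left_inv := by
    rintro ⟨p, p', f⟩
    refine Prod.ext ?_ (Prod.ext ?_ ?_)
    · simp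
    · simp [Ne.symm huv]
    · funext i
      simp [i.2.1, i.2.2]
  right_inv s := by
    funext i
    by_cases h1 : i = u
    · subst h1; simp
    · by_cases h2 : i = v
      · subst h2; simp [h1]
      · simp [h1, h2]

lemma E_apply_u (u v : ι) (huv : u ≠ v) (z) : E u v huv d z u = z.1 := by
  simp [E]

lemma E_apply_v (u v : ι) (huv : u ≠ v) (z) : E u v huv d z v = z.2.1 := by
  simp [E, Ne.symm huv]

lemma E_apply_other (u v : ι) (huv : u ≠ v) (z) {i : ι} (h1 : i ≠ u) (h2 : i ≠ v) :
    E u v huv d z i = z.2.2 ⟨i, h1, h2⟩ := by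
  simp [E, h1, h2]

lemma prod_E (u v : ι) (huv : u ≠ v) (g : ι → Fin d → ℂ) (z) :
    (∏ i, g i (E u v huv d z i)) =
      g u z.1 * g v z.2.1 * ∏ i : {i : ι // i ≠ u ∧ i ≠ v}, g i.1 (z.2.2 i) := by
  rw [← Finset.mul_prod_erase Finset.univ _ (Finset.mem_univ u),
    ← Finset.mul_prod_erase _ _ (Finset.mem_erase.mpr ⟨Ne.symm huv, Finset.mem_univ v⟩),
    E_apply_u, E_apply_v, ← mul_assoc]
  congr 1
  rw [Finset.prod_subtype ((Finset.univ.erase u).erase v)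
    (p := fun i => i ≠ u ∧ i ≠ v) (fun i => by simp [and_comm])]
  refine Finset.prod_congr rfl fun i _ => ?_
  rw [E_apply_other u v huv z i.2.1 i.2.2]

lemma delta_eq (Q' : ι → Matrix (Fin d) (Fin d) ℂ)
    (hQ' : ∀ i, Q' i * (Q' i)ᴴ = 1) (u v : ι) (x y : ι → Fin d) :
    (if ∀ i, i ≠ u → i ≠ v → x i = y i then (1:ℂ) else 0) =
      ∑ f : {i : ι // i ≠ u ∧ i ≠ v} → Fin d,
        ∏ i, Q' i.1 (x i.1) (f i) * star (Q' i.1 (y i.1) (f i)) := by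
  classical
  have hps := Finset.prod_univ_sum (κ := fun _ : {i : ι // i ≠ u ∧ i ≠ v} => Fin d)
      (fun _ => (Finset.univ : Finset (Fin d)))
      (fun i z => Q' i.1 (x i.1) z * star (Q' i.1 (y i.1) z))
  rw [Fintype.piFinset_univ] at hps
  rw [← hps]
  have h1 : ∀ i : {i : ι // i ≠ u ∧ i ≠ v},
      (∑ z : Fin d, Q' i.1 (x i.1) z * star (Q' i.1 (y i.1) z)) =
        if x i.1 = y i.1 then (1:ℂ) else 0 := by
    intro i
    have : (Q' i.1 * (Q' i.1)ᴴ) (x i.1) (y i.1) = (1 : Matrix (Fin d) (Fin d) ℂ) (x i.1) (y i.1) := by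
      rw [hQ' i.1]
    simpa [Matrix.mul_apply, Matrix.conjTranspose_apply, Matrix.one_apply] using this
  rw [Finset.prod_congr rfl fun i _ => h1 i, Finset.prod_boole]
  congr 1
  simp only [Finset.mem_univ, true_implies, eq_iff_iff]
  constructor
  · intro h i; exact h i.1 i.2.1 i.2.2
  · intro h i h1 h2; exact h ⟨i, h1, h2⟩

lemma sum_rot3 {A B C : Type*} [Fintype A] [Fintype B] [Fintype C]
    (h : A → B → C → ℂ) :
    ∑ a : A, ∑ b : B, ∑ cc : C, h a b cc = ∑ cc : C, ∑ a : A, ∑ b : B, h a b cc :=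
  (Finset.sum_congr rfl fun _ _ => Finset.sum_comm).trans Finset.sum_comm

lemma key (Q' : ι → Matrix (Fin d) (Fin d) ℂ)
    (hQ' : ∀ i, Q' i * (Q' i)ᴴ = 1)
    (u v : ι) (huv : u ≠ v)
    (h₂ : Matrix (Fin d × Fin d) (Fin d × Fin d) ℂ)
    (A M : Matrix (ι → Fin d) (ι → Fin d) ℂ)
    (hA : ∀ x s, A x s = ∏ i, Q' i (x i) (s i))
    (hM : ∀ s t, M s t = if ∀ i, i ≠ u → i ≠ v → s i = t i then h₂ (s u, s v) (t u, t v) else 0)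
    (x y : ι → Fin d) :
    (A * M * Aᴴ) x y =
      (if ∀ i, i ≠ u → i ≠ v → x i = y i then 1 else 0) *
        ∑ p : Fin d, ∑ p' : Fin d, ∑ q : Fin d, ∑ q' : Fin d,
          Q' u (x u) p * Q' v (x v) p' * h₂ (p, p') (q, q') *
            star (Q' u (y u) q) * star (Q' v (y v) q') := by
  classical
  set e := E u v huv d with he
  have hentry : (A * M * Aᴴ) x y = ∑ s, ∑ t, A x s * M s t * star (A y t) := by
    simp only [Matrix.mul_apply, Matrix.conjTranspose_apply, Finset.sum_mul]
    exact Finset.sum_comm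
  have hre : ∀ F : (ι → Fin d) → ℂ, ∑ s, F s = ∑ z, F (e z) :=
    fun F => (Equiv.sum_comp e F).symm
  rw [hentry]
  simp only [hre]
  have hcond : ∀ z w, (∀ i, i ≠ u → i ≠ v → e z i = e w i) ↔ z.2.2 = w.2.2 := by
    intro z w
    constructor
    · intro hh; funext i
      have := hh i.1 i.2.1 i.2.2
      rwa [E_apply_other u v huv z i.2.1 i.2.2, E_apply_other u v huv w i.2.1 i.2.2] at this
    · intro hh i h1 h2
      rw [E_apply_other u v huv z h1 h2, E_apply_other u v huv w h1 h2, hh]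
  simp only [he] at hcond ⊢
  simp only [hA, hM, hcond, prod_E u v huv, E_apply_u u v huv, E_apply_v u v huv,
    star_mul', star_prod]
  simp only [Fintype.sum_prod_type]
  simp only [mul_ite, ite_mul, mul_zero, zero_mul, Finset.sum_ite_eq', Finset.sum_ite_eq,
    Finset.mem_univ, if_true]
  rw [sum_rot3]
  have hinner : ∀ f : {i : ι // i ≠ u ∧ i ≠ v} → Fin d,
      (∑ p : Fin d, ∑ p' : Fin d, ∑ q : Fin d, ∑ q' : Fin d,
        (Q' u (x u) p * Q' v (x v) p' * ∏ i : {i : ι // i ≠ u ∧ i ≠ v}, Q' i.1 (x i.1) (f i)) *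
            h₂ (p, p') (q, q') *
          (star (Q' u (y u) q) * star (Q' v (y v) q') *
            ∏ i : {i : ι // i ≠ u ∧ i ≠ v}, star (Q' i.1 (y i.1) (f i)))) =
      (∏ i : {i : ι // i ≠ u ∧ i ≠ v}, Q' i.1 (x i.1) (f i) * star (Q' i.1 (y i.1) (f i))) *
        ∑ p : Fin d, ∑ p' : Fin d, ∑ q : Fin d, ∑ q' : Fin d,
          Q' u (x u) p * Q' v (x v) p' * h₂ (p, p') (q, q') *
            star (Q' u (y u) q) * star (Q' v (y v) q') := by
    intro f
    simp only [Finset.mul_sum]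
    refine Finset.sum_congr rfl fun p _ => Finset.sum_congr rfl fun p' _ =>
      Finset.sum_congr rfl fun q _ => Finset.sum_congr rfl fun q' _ => ?_
    rw [Finset.prod_mul_distrib]
    ring
  rw [Finset.sum_congr rfl fun f _ => hinner f, ← Finset.sum_mul,
    ← delta_eq Q' hQ' u v x y]
  split_ifs <;> simp

lemma ite_inst {P : Prop} (i1 i2 : Decidable P) (a b : ℂ) :
    @ite ℂ P i1 a b = @ite ℂ P i2 a b := by
  rw [Subsingleton.elim i1 i2]

end Stmt17Aux


/-- Graph-coloring reduction for decoupling: if `c` is a proper coloring of the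
interaction graph `G` with `χ` colors and the scheme `Q` decouples every 2-local
term (traceless on each tensor factor) on `χ` fully coupled qudits, then applying at
step `j` the operation `U_j = ⊗_v Q_{j, c(v)}` decouples the 2-local Hamiltonian
`H = Σ_{(u,v) ∈ E(G)} H_{uv}` on `n` qudits: `(1/N) Σ_j U_j H U_j† = 0`. -/
theorem stmt17 (d n χ N : ℕ) (hd : 2 ≤ d)
    (G : SimpleGraph (Fin n)) [DecidableRel G.Adj] (c : Fin n → Fin χ)
    (hc : ∀ u v : Fin n, G.Adj u v → c u ≠ c v)
    (Q : Fin N → Fin χ → Matrix (Fin d) (Fin d) ℂ)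
    (hQ : ∀ j a, Q j a * (Q j a)ᴴ = 1 ∧ (Q j a)ᴴ * Q j a = 1)
    -- embedding of a two-qudit operator at positions `a ≠ b` of the `χ`-qudit system
    (embχ : Fin χ → Fin χ → Matrix (Fin d × Fin d) (Fin d × Fin d) ℂ →
      Matrix (Fin χ → Fin d) (Fin χ → Fin d) ℂ)
    (hembχ : ∀ a b h₂ x y, embχ a b h₂ x y =
      if ∀ i : Fin χ, i ≠ a → i ≠ b → x i = y i then h₂ (x a, x b) (y a, y b) else 0)
    (W : Fin N → Matrix (Fin χ → Fin d) (Fin χ → Fin d) ℂ)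
    (hW : ∀ j x y, W j x y = ∏ a : Fin χ, Q j a (x a) (y a))
    -- `Q` is a decoupling scheme for all 2-local terms, traceless on each factor,
    -- on `χ` fully coupled qudits
    (hdecχ : ∀ a b : Fin χ, a ≠ b →
      ∀ h₂ : Matrix (Fin d × Fin d) (Fin d × Fin d) ℂ,
        (∀ p q : Fin d, ∑ z : Fin d, h₂ (z, p) (z, q) = 0) →
        (∀ p q : Fin d, ∑ z : Fin d, h₂ (p, z) (q, z) = 0) →
        ((N : ℂ)⁻¹) • ∑ j, W j * embχ a b h₂ * (W j)ᴴ = 0)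
    -- the 2-local Hamiltonian with interaction graph `G`
    (h : Fin n → Fin n → Matrix (Fin d × Fin d) (Fin d × Fin d) ℂ)
    (hherm : ∀ u v, G.Adj u v → (h u v).IsHermitian)
    (htr1 : ∀ u v, G.Adj u v → ∀ p q : Fin d, ∑ z : Fin d, (h u v) (z, p) (z, q) = 0)
    (htr2 : ∀ u v, G.Adj u v → ∀ p q : Fin d, ∑ z : Fin d, (h u v) (p, z) (q, z) = 0)
    (embn : Fin n → Fin n → Matrix (Fin d × Fin d) (Fin d × Fin d) ℂ →
      Matrix (Fin n → Fin d) (Fin n → Fin d) ℂ)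
    (hembn : ∀ u v h₂ x y, embn u v h₂ x y =
      if ∀ i : Fin n, i ≠ u → i ≠ v → x i = y i then h₂ (x u, x v) (y u, y v) else 0)
    (Hmat : Matrix (Fin n → Fin d) (Fin n → Fin d) ℂ)
    (hH : Hmat = ∑ p ∈ Finset.univ.filter
        (fun p : Fin n × Fin n => p.1 < p.2 ∧ G.Adj p.1 p.2),
      embn p.1 p.2 (h p.1 p.2))
    (U : Fin N → Matrix (Fin n → Fin d) (Fin n → Fin d) ℂ)
    (hU : ∀ j x y, U j x y = ∏ i : Fin n, Q j (c i) (x i) (y i)) :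
    ((N : ℂ)⁻¹) • ∑ j, U j * Hmat * (U j)ᴴ = 0 := by
  classical
  subst hH
  have hd1 : 0 < d := by omega
  have hedge : ∀ u v : Fin n, u ≠ v → G.Adj u v →
      ((N : ℂ)⁻¹) • ∑ j, U j * embn u v (h u v) * (U j)ᴴ = 0 := by
    intro u v huv hadj
    have hab : c u ≠ c v := hc u v hadj
    ext x y
    simp only [Matrix.smul_apply, Matrix.zero_apply, Matrix.sum_apply, smul_eq_mul]
    have hkeyn : ∀ j, (U j * embn u v (h u v) * (U j)ᴴ) x y =
        (if ∀ i, i ≠ u → i ≠ v → x i = y i then 1 else 0) *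
          ∑ p : Fin d, ∑ p' : Fin d, ∑ q : Fin d, ∑ q' : Fin d,
            Q j (c u) (x u) p * Q j (c v) (x v) p' * (h u v) (p, p') (q, q') *
              star (Q j (c u) (y u) q) * star (Q j (c v) (y v) q') := by
      intro j
      rw [Stmt17Aux.key (fun i => Q j (c i)) (fun i => (hQ j (c i)).1) u v huv (h u v)
        (U j) (embn u v (h u v)) (hU j)
        (fun s t => (hembn u v (h u v) s t).trans (Stmt17Aux.ite_inst _ _ _ _)) x y]
      congr 1
      exact Stmt17Aux.ite_inst _ _ _ _
    set x' : Fin χ → Fin d := fun i => if i = c u then x u else if i = c v then x v else ⟨0, hd1⟩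
      with hx'
    set y' : Fin χ → Fin d := fun i => if i = c u then y u else if i = c v then y v else ⟨0, hd1⟩
      with hy'
    have hx'a : x' (c u) = x u := by simp [hx']
    have hx'b : x' (c v) = x v := by simp [hx', Ne.symm hab]
    have hy'a : y' (c u) = y u := by simp [hy']
    have hy'b : y' (c v) = y v := by simp [hy', Ne.symm hab]
    have hkeyχ : ∀ j, (W j * embχ (c u) (c v) (h u v) * (W j)ᴴ) x' y' =
        ∑ p : Fin d, ∑ p' : Fin d, ∑ q : Fin d, ∑ q' : Fin d,
          Q j (c u) (x u) p * Q j (c v) (x v) p' * (h u v) (p, p') (q, q') *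
            star (Q j (c u) (y u) q) * star (Q j (c v) (y v) q') := by
      intro j
      rw [Stmt17Aux.key (Q j) (fun a => (hQ j a).1) (c u) (c v) hab (h u v)
        (W j) (embχ (c u) (c v) (h u v)) (hW j)
        (fun s t => (hembχ (c u) (c v) (h u v) s t).trans (Stmt17Aux.ite_inst _ _ _ _)) x' y']
      rw [hx'a, hx'b, hy'a, hy'b]
      rw [if_pos, one_mul]
      intro i h1 h2
      simp [hx', hy', h1, h2]
    have hχ := hdecχ (c u) (c v) hab (h u v) (htr1 u v hadj) (htr2 u v hadj)
    have h0 : ((N : ℂ)⁻¹) * ∑ j, (W j * embχ (c u) (c v) (h u v) * (W j)ᴴ) x' y' = 0 := by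
      have h1 : (((N : ℂ)⁻¹) • ∑ j, W j * embχ (c u) (c v) (h u v) * (W j)ᴴ) x' y'
          = (0 : Matrix (Fin χ → Fin d) (Fin χ → Fin d) ℂ) x' y' := by rw [hχ]
      simpa [Matrix.smul_apply, Matrix.sum_apply] using h1
    have hFsum : ((N : ℂ)⁻¹) * ∑ j, (∑ p : Fin d, ∑ p' : Fin d, ∑ q : Fin d, ∑ q' : Fin d,
        Q j (c u) (x u) p * Q j (c v) (x v) p' * (h u v) (p, p') (q, q') *
          star (Q j (c u) (y u) q) * star (Q j (c v) (y v) q')) = 0 := by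
      rw [← Finset.sum_congr rfl fun j _ => hkeyχ j]
      exact h0
    rw [Finset.sum_congr rfl fun j _ => hkeyn j, ← Finset.mul_sum, mul_left_comm, hFsum,
      mul_zero]
  have expand : ∀ j, U j * (∑ p ∈ Finset.univ.filter
        (fun p : Fin n × Fin n => p.1 < p.2 ∧ G.Adj p.1 p.2), embn p.1 p.2 (h p.1 p.2)) * (U j)ᴴ
      = ∑ p ∈ Finset.univ.filter (fun p : Fin n × Fin n => p.1 < p.2 ∧ G.Adj p.1 p.2),
          U j * embn p.1 p.2 (h p.1 p.2) * (U j)ᴴ := fun j => by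
    rw [Finset.mul_sum, Finset.sum_mul]
  rw [Finset.sum_congr rfl fun j _ => expand j, Finset.sum_comm, Finset.smul_sum]
  refine Finset.sum_eq_zero fun p hp => ?_
  rw [Finset.mem_filter] at hp
  exact hedge p.1 p.2 (ne_of_lt hp.2.1) hp.2.2
end
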